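/- Define f₄(b) = -4π ∫₀^π [(1 + b cosθ) sinθ cosθ] / (1 + cos²θ + 2b cosθ) dθ for b ∈ (-1,1). Then f₄ is differentiable with f₄'(b) = 4π ∫₀^π sin³θ cos²θ / (1 + cos²θ + 2b cosθ)² dθ, and in particular f₄'(b) > 0 for all b ∈ (-1,1). -/

import Mathlib

/-! Since `1 + c² + 2bc = (c + b)² + 1 - b² ≥ 1 - b²`, the denominator stays above `1 - m²` for
all `b` in `(-m, m)` with `m < 1`; the `b`-derivative of the integrand is therefore dominated by a
constant and one may differentiate under the integral sign. Using `sin² + cos² = 1`, that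
derivative is `-sin³θ cos²θ / (1 + cos²θ + 2b cosθ)²`, which is `≤ 0` on `[0, π]` and not
identically zero, so its integral is negative and `f₄' > 0`. -/

open Real

noncomputable def f₄ (b : ℝ) : ℝ :=
  -(4 * Real.pi) * ∫ θ in (0:ℝ)..Real.pi,
    (1 + b*Real.cos θ) * Real.sin θ * Real.cos θ / (1 + (Real.cos θ)^2 + 2*b*Real.cos θ)

open Set Filter Topology MeasureTheory

lemma one_sub_sq_le_one_add_sq_add_two_mul_mul (b c : ℝ) : 1 - b ^ 2 ≤ 1 + c ^ 2 + 2 * b * c := by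
  nlinarith [sq_nonneg (c + b)]

lemma one_add_sq_add_two_mul_mul_pos {b : ℝ} (hb : b ∈ Ioo (-1) 1) (c : ℝ) :
    0 < 1 + c ^ 2 + 2 * b * c := by
  have : b ^ 2 < 1 := by nlinarith [hb.1, hb.2]
  linarith [one_sub_sq_le_one_add_sq_add_two_mul_mul b c]

lemma hasDerivAt_mul_sin_mul_cos_div {x : ℝ} (θ : ℝ) (hx : x ∈ Ioo (-1) 1) :
    HasDerivAt (fun y => (1 + y * cos θ) * sin θ * cos θ / (1 + cos θ ^ 2 + 2 * y * cos θ))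
      (-(sin θ ^ 3 * cos θ ^ 2 / (1 + cos θ ^ 2 + 2 * x * cos θ) ^ 2)) x := by
  have hD := (one_add_sq_add_two_mul_mul_pos hx (cos θ)).ne'
  have hnum := (((hasDerivAt_id' x).mul_const (cos θ)).const_add 1).mul_const (sin θ)
    |>.mul_const (cos θ)
  have hden := (((hasDerivAt_id' x).const_mul 2).mul_const (cos θ)).const_add (1 + cos θ ^ 2)
  refine (hnum.div hden hD).congr_deriv ?_
  rw [← neg_div]
  congr 1
  linear_combination sin θ * cos θ ^ 2 * sin_sq_add_cos_sq θ

lemma abs_sin_pow_mul_cos_sq_div_le {m x : ℝ} (θ : ℝ) (hm : m < 1) (hx : |x| ≤ m) :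
    |sin θ ^ 3 * cos θ ^ 2 / (1 + cos θ ^ 2 + 2 * x * cos θ) ^ 2| ≤ 1 / (1 - m ^ 2) ^ 2 := by
  have hm0 : 0 < 1 - m ^ 2 := by nlinarith [abs_nonneg x]
  have hxm : x ^ 2 ≤ m ^ 2 := by simpa only [sq_abs] using pow_le_pow_left₀ (abs_nonneg x) hx 2
  have hD : 1 - m ^ 2 ≤ 1 + cos θ ^ 2 + 2 * x * cos θ := by
    linarith [one_sub_sq_le_one_add_sq_add_two_mul_mul x (cos θ)]
  have hnum : |sin θ ^ 3 * cos θ ^ 2| ≤ 1 := by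
    rw [abs_mul, abs_pow, abs_pow]
    exact mul_le_one₀ (pow_le_one₀ (abs_nonneg _) (abs_sin_le_one θ)) (by positivity)
      (pow_le_one₀ (abs_nonneg _) (abs_cos_le_one θ))
  rw [abs_div, abs_sq]
  exact div_le_div₀ zero_le_one hnum (pow_pos hm0 2) (pow_le_pow_left₀ hm0.le hD 2)

lemma continuous_mul_sin_mul_cos_div {x : ℝ} (hx : x ∈ Ioo (-1) 1) :
    Continuous fun θ => (1 + x * cos θ) * sin θ * cos θ / (1 + cos θ ^ 2 + 2 * x * cos θ) :=
  .div (by fun_prop) (by fun_prop) fun θ => (one_add_sq_add_two_mul_mul_pos hx (cos θ)).ne'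

lemma continuous_sin_pow_mul_cos_sq_div {x : ℝ} (hx : x ∈ Ioo (-1) 1) :
    Continuous fun θ => sin θ ^ 3 * cos θ ^ 2 / (1 + cos θ ^ 2 + 2 * x * cos θ) ^ 2 :=
  .div (by fun_prop) (by fun_prop) fun θ => pow_ne_zero 2 (one_add_sq_add_two_mul_mul_pos hx _).ne'

lemma hasDerivAt_integral_mul_sin_mul_cos_div {b : ℝ} (hb : b ∈ Ioo (-1) 1) :
    HasDerivAt (fun x => ∫ θ in 0..π,
        (1 + x * cos θ) * sin θ * cos θ / (1 + cos θ ^ 2 + 2 * x * cos θ))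
      (∫ θ in 0..π, -(sin θ ^ 3 * cos θ ^ 2 / (1 + cos θ ^ 2 + 2 * b * cos θ) ^ 2)) b := by
  obtain ⟨m, hbm, hm⟩ := exists_between (abs_lt.mpr hb)
  have hnhds : Ioo (-m) m ∈ 𝓝 b := Ioo_mem_nhds (abs_lt.mp hbm).1 (abs_lt.mp hbm).2
  have hsub : Ioo (-m) m ⊆ Ioo (-1) 1 := Ioo_subset_Ioo (neg_le_neg hm.le) hm.le
  refine (intervalIntegral.hasDerivAt_integral_of_dominated_loc_of_deriv_le
    (F := fun x θ => (1 + x * cos θ) * sin θ * cos θ / (1 + cos θ ^ 2 + 2 * x * cos θ))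
    (F' := fun x θ => -(sin θ ^ 3 * cos θ ^ 2 / (1 + cos θ ^ 2 + 2 * x * cos θ) ^ 2))
    (bound := fun _ => 1 / (1 - m ^ 2) ^ 2) hnhds ?_ ?_ ?_ ?_ intervalIntegrable_const ?_).2
  · filter_upwards [hnhds] with x hx
    exact (continuous_mul_sin_mul_cos_div (hsub hx)).aestronglyMeasurable
  · exact (continuous_mul_sin_mul_cos_div hb).intervalIntegrable _ _
  · exact (continuous_sin_pow_mul_cos_sq_div hb).neg.aestronglyMeasurable
  · refine ae_of_all _ fun θ _ x hx => ?_
    rw [norm_neg, norm_eq_abs]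
    exact abs_sin_pow_mul_cos_sq_div_le θ hm (abs_lt.mpr hx).le
  · exact ae_of_all _ fun θ _ x hx => hasDerivAt_mul_sin_mul_cos_div θ (hsub hx)

lemma integral_sin_pow_mul_cos_sq_div_pos {b : ℝ} (hb : b ∈ Ioo (-1) 1) :
    0 < ∫ θ in 0..π, sin θ ^ 3 * cos θ ^ 2 / (1 + cos θ ^ 2 + 2 * b * cos θ) ^ 2 := by
  refine intervalIntegral.integral_pos pi_pos (continuous_sin_pow_mul_cos_sq_div hb).continuousOn
    (fun θ hθ => ?_) ⟨π / 3, ⟨by positivity, by linarith [pi_pos]⟩, ?_⟩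
  · have := sin_nonneg_of_nonneg_of_le_pi hθ.1.le hθ.2
    positivity
  · have hs := sin_pos_of_pos_of_lt_pi (by positivity : 0 < π / 3) (by linarith [pi_pos])
    have hc : 0 < cos (π / 3) := by rw [cos_pi_div_three]; norm_num
    exact div_pos (by positivity) (pow_pos (one_add_sq_add_two_mul_mul_pos hb _) 2)

theorem f₄_deriv : ∀ b ∈ Set.Ioo (-1:ℝ) 1,
    HasDerivAt f₄
      (4 * Real.pi * ∫ θ in (0:ℝ)..Real.pi,
        (Real.sin θ)^3 * (Real.cos θ)^2 / (1 + (Real.cos θ)^2 + 2*b*Real.cos θ)^2) b ∧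
    0 < 4 * Real.pi * ∫ θ in (0:ℝ)..Real.pi,
        (Real.sin θ)^3 * (Real.cos θ)^2 / (1 + (Real.cos θ)^2 + 2*b*Real.cos θ)^2 := by
  intro b hb
  refine ⟨?_, mul_pos (by positivity) (integral_sin_pow_mul_cos_sq_div_pos hb)⟩
  have h := (hasDerivAt_integral_mul_sin_mul_cos_div hb).const_mul (-(4 * π))
  rwa [intervalIntegral.integral_neg, neg_mul_neg] at h
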